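/- Every 2-dimensional weakly neighbourly antipodal convex polygon has at most 3 vertices. -/

import Mathlib

/-!
Among four vertices of a planar polygon, Radon's theorem splits them into two parts with
intersecting convex hulls. A part cannot be a single vertex, since a vertex is not a convex
combination of other points of the polygon; so two "diagonals" `[a, c]` and `[b, d]` cross at
some point `p`. Weak neighbourliness puts `a` and `c` on a supporting line `⟪n, x⟫ = c₀`, which
then contains `p`; as `⟪n, ·⟫ ≤ c₀` on the polygon, it also contains `b` or `d`. But three
vertices are never collinear, as the middle one would lie in the segment spanned by the others.
-/

open scoped RealInnerProductSpace

def IsFaceOf (K F : Set (EuclideanSpace ℝ (Fin 2))) : Prop :=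
  ∃ (n : EuclideanSpace ℝ (Fin 2)) (c : ℝ), n ≠ 0 ∧ (∀ x ∈ K, ⟪n, x⟫ ≤ c) ∧
    (∃ x ∈ K, ⟪n, x⟫ = c) ∧ F = {x ∈ K | ⟪n, x⟫ = c}

open Finset Module

section OrderedField

variable {𝕜 E : Type*} [Field 𝕜] [LinearOrder 𝕜] [IsStrictOrderedRing 𝕜]
  [AddCommGroup E] [Module 𝕜 E] {A T : Set E} {x y z : E}

theorem mem_of_mem_extremePoints_of_mem_convexHull (hA : Convex 𝕜 A) (hTA : T ⊆ A)
    (hx : x ∈ A.extremePoints 𝕜) (hxT : x ∈ convexHull 𝕜 T) : x ∈ T :=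
  extremePoints_convexHull_subset
    (inter_extremePoints_subset_extremePoints_of_subset (convexHull_min hTA hA) ⟨hxT, hx⟩)

theorem Wbtw.eq_or_eq_of_mem_extremePoints (h : Wbtw 𝕜 x y z) (hx : x ∈ A) (hz : z ∈ A)
    (hy : y ∈ A.extremePoints 𝕜) : y = x ∨ y = z := by
  rcases (mem_extremePoints_iff_forall_segment.1 hy).2 x hx z hz h.mem_segment with h | h
  exacts [Or.inl h.symm, Or.inr h.symm]

theorem not_collinear_of_mem_extremePoints (hx : x ∈ A.extremePoints 𝕜)
    (hy : y ∈ A.extremePoints 𝕜) (hz : z ∈ A.extremePoints 𝕜)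
    (hxy : x ≠ y) (hxz : x ≠ z) (hyz : y ≠ z) : ¬ Collinear 𝕜 {x, y, z} := by
  intro h
  rcases h.wbtw_or_wbtw_or_wbtw with h | h | h
  · rcases h.eq_or_eq_of_mem_extremePoints hx.1 hz.1 hy with h | h
    exacts [hxy h.symm, hyz h]
  · rcases h.eq_or_eq_of_mem_extremePoints hy.1 hx.1 hz with h | h
    exacts [hyz h.symm, hxz h.symm]
  · rcases h.eq_or_eq_of_mem_extremePoints hz.1 hy.1 hx with h | h
    exacts [hxz h, hxy h]

variable [FiniteDimensional 𝕜 E]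

theorem exists_not_disjoint_convexHull_sdiff [DecidableEq E] {T : Finset E}
    (hT : finrank 𝕜 E + 1 < #T) :
    ∃ A ⊆ T, ¬ Disjoint (convexHull 𝕜 (A : Set E)) (convexHull 𝕜 ↑(T \ A)) := by
  classical
  have hdep : ¬ AffineIndependent 𝕜 ((↑) : T → E) := fun h => by
    have := (h.card_le_finrank_succ).trans (Nat.succ_le_succ (Submodule.finrank_le _))
    rw [Fintype.card_coe] at this
    omega
  obtain ⟨I, p, hpI, hpIc⟩ := Convex.radon_partition hdep
  refine ⟨I.toFinset.image (↑), image_subset_iff.2 fun x _ => x.2,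
    Set.not_disjoint_iff.2 ⟨p, ?_, ?_⟩⟩
  · simpa using hpI
  · simpa [Set.image_compl_eq_range_sdiff_image Subtype.val_injective] using hpIc

end OrderedField

section InnerProductSpace

variable {E : Type*} [NormedAddCommGroup E] [InnerProductSpace ℝ E] {n p b d : E} {c : ℝ}

theorem collinear_of_inner_eq [FiniteDimensional ℝ E] (hE : finrank ℝ E = 2) {s : Set E}
    (hn : n ≠ 0) (hs : ∀ x ∈ s, ⟪n, x⟫ = c) : Collinear ℝ s := by
  have : Fact (finrank ℝ E = 1 + 1) := ⟨hE⟩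
  rw [collinear_iff_finrank_le_one]
  refine (Submodule.finrank_mono (?_ : vectorSpan ℝ s ≤ (ℝ ∙ n)ᗮ)).trans
    (Submodule.finrank_orthogonal_span_singleton hn).le
  rw [vectorSpan_def, Submodule.span_le]
  rintro _ ⟨x, hx, y, hy, rfl⟩
  rw [SetLike.mem_coe, Submodule.mem_orthogonal_singleton_iff_inner_right]
  simp only [vsub_eq_sub, inner_sub_right, hs x hx, hs y hy, sub_self]

theorem inner_eq_of_mem_segment {a : E} (ha : ⟪n, a⟫ = c) (hb : ⟪n, b⟫ = c)
    (hp : p ∈ segment ℝ a b) : ⟪n, p⟫ = c :=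
  (convex_hyperplane (innerₛₗ ℝ n).isLinear c).segment_subset ha hb hp

theorem inner_eq_or_inner_eq_of_mem_segment (hb : ⟪n, b⟫ ≤ c) (hd : ⟪n, d⟫ ≤ c)
    (hp : p ∈ segment ℝ b d) (hpc : ⟪n, p⟫ = c) : ⟪n, b⟫ = c ∨ ⟪n, d⟫ = c := by
  have := ((innerₛₗ ℝ n).convexOn convex_univ).le_on_segment trivial trivial hp
  simp only [innerₛₗ_apply_apply, hpc, le_max_iff] at this
  exact this.imp hb.antisymm hd.antisymm

end InnerProductSpace

local notation "ℝ²" => EuclideanSpace ℝ (Fin 2)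

def IsWeaklyNeighbourly (P V : Set ℝ²) : Prop :=
  ∀ u ∈ V, ∀ w ∈ V, ∃ F, IsFaceOf P F ∧ u ∈ F ∧ w ∈ F

namespace IsWeaklyNeighbourly

variable {P V : Set ℝ²}

theorem disjoint_segment (hwn : IsWeaklyNeighbourly P V) (hV : V ⊆ P.extremePoints ℝ)
    {a b c d : ℝ²} (ha : a ∈ V) (hb : b ∈ V) (hc : c ∈ V) (hd : d ∈ V)
    (hac : a ≠ c) (hab : a ≠ b) (had : a ≠ d) (hcb : c ≠ b) (hcd : c ≠ d) :
    Disjoint (segment ℝ a c) (segment ℝ b d) := by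
  obtain ⟨F, ⟨n, c₀, hn, hle, -, rfl⟩, haF, hcF⟩ := hwn a ha c hc
  have hno_third : ∀ x ∈ V, ⟪n, x⟫ = c₀ → x ≠ a → x ≠ c → False := fun x hx hxc₀ hxa hxc =>
    not_collinear_of_mem_extremePoints (hV ha) (hV hx) (hV hc) hxa.symm hac hxc
      (collinear_of_inner_eq finrank_euclideanSpace_fin hn (by
        simp only [Set.mem_insert_iff, Set.mem_singleton_iff, forall_eq_or_imp, forall_eq]
        exact ⟨haF.2, hxc₀, hcF.2⟩))
  refine Set.disjoint_left.2 fun p hpac hpbd => ?_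
  rcases inner_eq_or_inner_eq_of_mem_segment (hle b (hV hb).1) (hle d (hV hd).1) hpbd
    (inner_eq_of_mem_segment haF.2 hcF.2 hpac) with h | h
  exacts [hno_third b hb h hab.symm hcb.symm, hno_third d hd h had.symm hcd.symm]

theorem disjoint_convexHull (hwn : IsWeaklyNeighbourly P V) (hP : Convex ℝ P)
    (hV : V ⊆ P.extremePoints ℝ) {A B : Finset ℝ²} (hA : ↑A ⊆ V) (hB : ↑B ⊆ V)
    (hAB : Disjoint A B) (hcard : #A + #B = 4) :
    Disjoint (convexHull ℝ (A : Set ℝ²)) (convexHull ℝ ↑B) := by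
  wlog hle : #A ≤ #B generalizing A B
  · exact (this hB hA hAB.symm (by omega) (by omega)).symm
  rcases (show #A = 0 ∨ #A = 1 ∨ #A = 2 by omega) with h | h | h
  · simp [card_eq_zero.1 h]
  · obtain ⟨x, rfl⟩ := card_eq_one.1 h
    rw [coe_singleton, convexHull_singleton, Set.disjoint_singleton_left]
    exact fun hxB => disjoint_singleton_left.1 hAB
      (mem_of_mem_extremePoints_of_mem_convexHull hP (fun y hy => (hV (hB hy)).1)
        (hV (hA (mem_singleton_self x))) hxB)
  · obtain ⟨a, c, hac, rfl⟩ := card_eq_two.1 h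
    obtain ⟨b, d, -, rfl⟩ := card_eq_two.1 (show #B = 2 by omega)
    simp only [coe_pair, convexHull_pair]
    simp only [disjoint_insert_left, disjoint_insert_right, disjoint_singleton, mem_insert,
      mem_singleton, not_or] at hAB
    obtain ⟨⟨hba, hbc⟩, had, hcd⟩ := hAB
    exact hwn.disjoint_segment hV (hA (by simp)) (hB (by simp)) (hA (by simp)) (hB (by simp))
      hac (Ne.symm hba) had (Ne.symm hbc) hcd

end IsWeaklyNeighbourly

theorem wn_antipodal_polygon_at_most_three_vertices_general
    (P : Set (EuclideanSpace ℝ (Fin 2))) (V : Finset (EuclideanSpace ℝ (Fin 2)))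
    (hP : P = convexHull ℝ (V : Set (EuclideanSpace ℝ (Fin 2))))
    (hV : (V : Set (EuclideanSpace ℝ (Fin 2))) = Set.extremePoints ℝ P)
    (hwn : ∀ u ∈ V, ∀ w ∈ V, ∃ F, IsFaceOf P F ∧ u ∈ F ∧ w ∈ F) :
    V.card ≤ 3 := by
  classical
  by_contra! hcard
  obtain ⟨T, hTV, hT⟩ := exists_subset_card_eq (show 4 ≤ #V from hcard)
  obtain ⟨A, hAT, hA⟩ :=
    exists_not_disjoint_convexHull_sdiff (𝕜 := ℝ) (by rw [finrank_euclideanSpace_fin, hT]; norm_num)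
  have hTV' : (T : Set ℝ²) ⊆ V := coe_subset.2 hTV
  exact hA (IsWeaklyNeighbourly.disjoint_convexHull hwn (hP ▸ convex_convexHull ℝ _) hV.subset
    ((coe_subset.2 hAT).trans hTV') ((coe_subset.2 sdiff_subset).trans hTV') disjoint_sdiff
    (by rw [← hT, add_comm, card_sdiff_add_card_eq_card hAT]))

theorem wn_antipodal_polygon_at_most_three_vertices
    (P : Set (EuclideanSpace ℝ (Fin 2))) (V : Finset (EuclideanSpace ℝ (Fin 2)))
    (hP : P = convexHull ℝ (V : Set (EuclideanSpace ℝ (Fin 2))))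
    (hV : (V : Set (EuclideanSpace ℝ (Fin 2))) = Set.extremePoints ℝ P)
    (hfull : (interior P).Nonempty)
    (hwn : ∀ u ∈ V, ∀ w ∈ V, ∃ F, IsFaceOf P F ∧ u ∈ F ∧ w ∈ F)
    (hap : ∀ u ∈ V, ∀ w ∈ V, u ≠ w → ∃ n : EuclideanSpace ℝ (Fin 2), n ≠ 0 ∧
      (∀ x ∈ P, ⟪n, x⟫ ≤ ⟪n, u⟫) ∧ (∀ x ∈ P, ⟪n, w⟫ ≤ ⟪n, x⟫) ∧ ⟪n, u⟫ ≠ ⟪n, w⟫) :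
    V.card ≤ 3 :=
  wn_antipodal_polygon_at_most_three_vertices_general P V hP hV hwn
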